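/- Let t < t' be integers such that no value of A and no value of B lies strictly between t and t'. If A[i] = B[j] = t' for some 1 ≤ i, j ≤ n, then dp_{t'}[i][j] = max( dp_t[i][j], dp_t[i−1][j−1] + 1 ), where dp_t[i'][j'] = 0 whenever i' = 0 or j' = 0. -/
import Mathlib


/-- `IsCIS A B i j ia jb` says that the index sequences `ia, jb` form a common
(strictly) increasing subsequence of `A[1..i]` and `B[1..j]`. -/
def IsCIS (A B : ℕ → ℤ) (i j : ℕ) {l : ℕ} (ia jb : Fin l → ℕ) : Prop :=
  StrictMono ia ∧ StrictMono jb ∧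
  (∀ k, 1 ≤ ia k ∧ ia k ≤ i) ∧
  (∀ k, 1 ≤ jb k ∧ jb k ≤ j) ∧
  (∀ k, A (ia k) = B (jb k)) ∧
  StrictMono fun k => A (ia k)

/-- `dpLCIS A B t i j` : maximal length of a common increasing subsequence of
`A[1..i]` and `B[1..j]` all of whose values are `≤ t` (0 if none exists). -/
noncomputable def dpLCIS (A B : ℕ → ℤ) (t : ℤ) (i j : ℕ) : ℕ :=
  sSup {l | ∃ ia jb : Fin l → ℕ, IsCIS A B i j ia jb ∧ ∀ k, A (ia k) ≤ t}

/-- `lcisTo A B x y` : maximal length of a common increasing subsequence of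
`A[1..x]` and `B[1..y]` whose last indices are exactly `x` and `y`. -/
noncomputable def lcisTo (A B : ℕ → ℤ) (x y : ℕ) : ℕ :=
  sSup {l | ∃ ia jb : Fin l → ℕ, IsCIS A B x y ia jb ∧
    ∃ k : Fin l, (∀ k', k' ≤ k) ∧ ia k = x ∧ jb k = y}

/-- `lcisLen A B i j` : maximal length of a common increasing subsequence of
`A[1..i]` and `B[1..j]`. -/
noncomputable def lcisLen (A B : ℕ → ℤ) (i j : ℕ) : ℕ :=
  sSup {l | ∃ ia jb : Fin l → ℕ, IsCIS A B i j ia jb}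

lemma len_le_of_isCIS {A B : ℕ → ℤ} {i j l : ℕ} {ia jb : Fin l → ℕ}
    (h : IsCIS A B i j ia jb) : l ≤ i := by
  obtain ⟨h1, -, h3, -⟩ := h
  have hinj : Function.Injective
      (fun k : Fin l => (⟨ia k - 1, by have := h3 k; omega⟩ : Fin i)) := by
    intro a b hab
    have ha := h3 a; have hb := h3 b
    simp only [Fin.mk.injEq] at hab
    exact h1.injective (by omega)
  simpa using Fintype.card_le_of_injective _ hinj

lemma dpLCIS_set_nonempty (A B : ℕ → ℤ) (t : ℤ) (i j : ℕ) :
    {l | ∃ ia jb : Fin l → ℕ, IsCIS A B i j ia jb ∧ ∀ k, A (ia k) ≤ t}.Nonempty := by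
  refine ⟨0, Fin.elim0, Fin.elim0, ⟨?_, ?_, ?_, ?_, ?_, ?_⟩, fun k => k.elim0⟩ <;>
    first
      | (intro a; exact a.elim0)
      | (intro a b hab; exact a.elim0)

lemma dpLCIS_set_bdd (A B : ℕ → ℤ) (t : ℤ) (i j : ℕ) :
    BddAbove {l | ∃ ia jb : Fin l → ℕ, IsCIS A B i j ia jb ∧ ∀ k, A (ia k) ≤ t} := by
  refine ⟨i, fun l hl => ?_⟩
  obtain ⟨ia, jb, h, -⟩ := hl
  exact len_le_of_isCIS h

theorem dp_recurrence_match (n : ℕ) (A B : ℕ → ℤ) (t t' : ℤ) (htt' : t < t')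
    (hA : ∀ k, 1 ≤ k → k ≤ n → ¬(t < A k ∧ A k < t'))
    (hB : ∀ k, 1 ≤ k → k ≤ n → ¬(t < B k ∧ B k < t'))
    (i j : ℕ) (hi1 : 1 ≤ i) (hin : i ≤ n) (hj1 : 1 ≤ j) (hjn : j ≤ n)
    (hAi : A i = t') (hBj : B j = t') :
    dpLCIS A B t' i j =
      max (dpLCIS A B t i j) (dpLCIS A B t (i - 1) (j - 1) + 1) := by
  have hbd' := dpLCIS_set_bdd A B t' i j
  have hbd := dpLCIS_set_bdd A B t i j
  have hbd0 := dpLCIS_set_bdd A B t (i-1) (j-1)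
  have hne' := dpLCIS_set_nonempty A B t' i j
  have hne := dpLCIS_set_nonempty A B t i j
  have hne0 := dpLCIS_set_nonempty A B t (i-1) (j-1)
  apply le_antisymm
  · -- dpLCIS t' ≤ max
    have hmem : ∃ ia jb : Fin (dpLCIS A B t' i j) → ℕ,
        IsCIS A B i j ia jb ∧ ∀ k, A (ia k) ≤ t' := Nat.sSup_mem hne' hbd'
    obtain ⟨ia, jb, ⟨hia, hjb, hiab, hjbb, heq, hvmono⟩, hval⟩ := hmem
    generalize hLdef : dpLCIS A B t' i j = L at *
    by_cases hall : ∀ k, A (ia k) ≤ t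
    · exact le_max_of_le_left (le_csSup hbd
        ⟨ia, jb, ⟨hia, hjb, hiab, hjbb, heq, hvmono⟩, hall⟩)
    · push_neg at hall
      obtain ⟨k0, hk0⟩ := hall
      have hL1 : 1 ≤ L := Nat.pos_of_ne_zero (by rintro rfl; exact k0.elim0)
      have hAk0 : A (ia k0) = t' := by
        have h1 := (hiab k0).1
        have h2 := (hiab k0).2
        have := hA (ia k0) h1 (le_trans h2 hin)
        have := hval k0
        omega
      have hk0max : ∀ k, k ≤ k0 := by
        intro k
        by_contra hk
        push_neg at hk
        have h1 : A (ia k0) < A (ia k) := hvmono hk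
        have := hval k
        omega
      have hk0val : (k0 : ℕ) = L - 1 := by
        have hlast := hk0max ⟨L - 1, by omega⟩
        rw [Fin.le_def] at hlast
        have := k0.isLt
        simp only at hlast
        omega
      have hmem0 : L - 1 ∈
          {l | ∃ ia jb : Fin l → ℕ, IsCIS A B (i-1) (j-1) ia jb ∧ ∀ k, A (ia k) ≤ t} := by
        have hcast : ∀ k : Fin (L-1), (k : ℕ) < L := fun k => by have := k.isLt; omega
        have hlt : ∀ k : Fin (L-1), (⟨(k : ℕ), hcast k⟩ : Fin L) < k0 := by
          intro k
          rw [Fin.lt_def]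
          have := k.isLt
          simp only
          omega
        refine ⟨fun k => ia ⟨k, hcast k⟩, fun k => jb ⟨k, hcast k⟩,
          ⟨?_, ?_, ?_, ?_, ?_, ?_⟩, ?_⟩
        · intro a b hab
          exact hia (by rw [Fin.lt_def] at hab ⊢; exact hab)
        · intro a b hab
          exact hjb (by rw [Fin.lt_def] at hab ⊢; exact hab)
        · intro k
          show 1 ≤ ia ⟨(k:ℕ), hcast k⟩ ∧ ia ⟨(k:ℕ), hcast k⟩ ≤ i - 1
          have h1 : ia ⟨k, hcast k⟩ < ia k0 := hia (hlt k)
          have h2 := hiab ⟨k, hcast k⟩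
          have h3 := (hiab k0).2
          omega
        · intro k
          show 1 ≤ jb ⟨(k:ℕ), hcast k⟩ ∧ jb ⟨(k:ℕ), hcast k⟩ ≤ j - 1
          have h1 : jb ⟨k, hcast k⟩ < jb k0 := hjb (hlt k)
          have h2 := hjbb ⟨k, hcast k⟩
          have h3 := (hjbb k0).2
          omega
        · intro k; exact heq _
        · intro a b hab
          exact hvmono (show (⟨(a:ℕ), hcast a⟩ : Fin L) < ⟨(b:ℕ), hcast b⟩ by
            rw [Fin.lt_def] at hab ⊢; exact hab)
        · intro k
          show A (ia ⟨(k:ℕ), hcast k⟩) ≤ t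
          have hv : A (ia ⟨k, hcast k⟩) < A (ia k0) := hvmono (hlt k)
          rw [hAk0] at hv
          have h1 := (hiab ⟨k, hcast k⟩).1
          have h2 := (hiab ⟨k, hcast k⟩).2
          have := hA (ia ⟨k, hcast k⟩) h1 (le_trans h2 hin)
          omega
      have : L - 1 ≤ dpLCIS A B t (i-1) (j-1) := le_csSup hbd0 hmem0
      exact le_max_of_le_right (by omega)
  · -- max ≤ dpLCIS t'
    apply max_le
    · have hmem : ∃ ia jb : Fin (dpLCIS A B t i j) → ℕ,
          IsCIS A B i j ia jb ∧ ∀ k, A (ia k) ≤ t := Nat.sSup_mem hne hbd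
      obtain ⟨ia, jb, hcis, hval⟩ := hmem
      exact le_csSup hbd' ⟨ia, jb, hcis, fun k => le_trans (hval k) htt'.le⟩
    · have hmem : ∃ ia jb : Fin (dpLCIS A B t (i-1) (j-1)) → ℕ,
          IsCIS A B (i-1) (j-1) ia jb ∧ ∀ k, A (ia k) ≤ t := Nat.sSup_mem hne0 hbd0
      obtain ⟨ia, jb, ⟨hia, hjb, hiab, hjbb, heq, hvmono⟩, hval⟩ := hmem
      generalize hldef : dpLCIS A B t (i-1) (j-1) = l at *
      have hmem' : l + 1 ∈
          {l | ∃ ia jb : Fin l → ℕ, IsCIS A B i j ia jb ∧ ∀ k, A (ia k) ≤ t'} := by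
        refine ⟨fun k => if h : (k : ℕ) < l then ia ⟨k, h⟩ else i,
                fun k => if h : (k : ℕ) < l then jb ⟨k, h⟩ else j,
                ⟨?_, ?_, ?_, ?_, ?_, ?_⟩, ?_⟩
        · intro a b hab
          rw [Fin.lt_def] at hab
          simp only
          by_cases hbl : (b : ℕ) < l
          · have hal : (a : ℕ) < l := by omega
            rw [dif_pos hal, dif_pos hbl]
            exact hia (by rw [Fin.lt_def]; exact hab)
          · have hal : (a : ℕ) < l := by have := b.isLt; omega
            rw [dif_pos hal, dif_neg hbl]
            have := (hiab ⟨a, hal⟩).2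
            omega
        · intro a b hab
          rw [Fin.lt_def] at hab
          simp only
          by_cases hbl : (b : ℕ) < l
          · have hal : (a : ℕ) < l := by omega
            rw [dif_pos hal, dif_pos hbl]
            exact hjb (by rw [Fin.lt_def]; exact hab)
          · have hal : (a : ℕ) < l := by have := b.isLt; omega
            rw [dif_pos hal, dif_neg hbl]
            have := (hjbb ⟨a, hal⟩).2
            omega
        · intro k
          by_cases hk : (k : ℕ) < l
          · simp only [dif_pos hk]
            have := hiab ⟨k, hk⟩
            omega
          · simp only [dif_neg hk]
            omega
        · intro k
          by_cases hk : (k : ℕ) < l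
          · simp only [dif_pos hk]
            have := hjbb ⟨k, hk⟩
            omega
          · simp only [dif_neg hk]
            omega
        · intro k
          by_cases hk : (k : ℕ) < l
          · simp only [dif_pos hk]; exact heq _
          · simp only [dif_neg hk]; rw [hAi, hBj]
        · intro a b hab
          rw [Fin.lt_def] at hab
          simp only
          by_cases hbl : (b : ℕ) < l
          · have hal : (a : ℕ) < l := by omega
            rw [dif_pos hal, dif_pos hbl]
            exact hvmono (show (⟨(a:ℕ), hal⟩ : Fin l) < ⟨(b:ℕ), hbl⟩ by
              rw [Fin.lt_def]; exact hab)
          · have hal : (a : ℕ) < l := by have := b.isLt; omega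
            rw [dif_pos hal, dif_neg hbl]
            rw [hAi]
            exact lt_of_le_of_lt (hval ⟨a, hal⟩) htt'
        · intro k
          by_cases hk : (k : ℕ) < l
          · simp only [dif_pos hk]
            exact le_trans (hval _) htt'.le
          · simp only [dif_neg hk]
            rw [hAi]
      exact le_csSup hbd' hmem'
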